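/- (Gentle measurement.) Let ρ be a density matrix on ℂ^n and let Λ be an n×n complex matrix with 0 ≤ Λ ≤ 1 in the Loewner order. If tr(ρΛ) ≥ 1 − ε for some ε ≥ 0, then |√Λ ρ √Λ − ρ|₁ ≤ √(8ε), where √Λ is the positive semidefinite square root of Λ. -/

import Mathlib

open Matrix ComplexOrder

/-- The positive semidefinite square root of a positive semidefinite matrix
(removed from Mathlib; restated with its old definition). -/
noncomputable def Matrix.PosSemidef.sqrt {n 𝕜 : Type*} [Fintype n] [DecidableEq n] [RCLike 𝕜]
    {A : Matrix n n 𝕜} (hA : A.PosSemidef) : Matrix n n 𝕜 :=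
  (hA.1.eigenvectorUnitary : Matrix n n 𝕜) *
    diagonal (fun i => ((Real.sqrt (hA.1.eigenvalues i) : ℝ) : 𝕜)) *
    (star (hA.1.eigenvectorUnitary : Matrix n n 𝕜))

section SqrtPort

open scoped MatrixOrder

variable {n 𝕜 : Type*} [Fintype n] [DecidableEq n] [RCLike 𝕜]

lemma Matrix.PosSemidef.sqrt_eq_cfcSqrt {A : Matrix n n 𝕜} (hA : A.PosSemidef) :
    hA.sqrt = CFC.sqrt A := by
  have hA0 : 0 ≤ A := Matrix.nonneg_iff_posSemidef.mpr hA
  rw [CFC.sqrt_eq_cfc, cfc_nnreal_eq_real _ A, hA.1.cfc_eq]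
  simp only [IsHermitian.cfc, Unitary.conjStarAlgAut_apply, Matrix.PosSemidef.sqrt]
  congr 3
  funext i
  simp [Real.coe_sqrt, Real.coe_toNNReal', max_eq_left (hA.eigenvalues_nonneg i)]

lemma Matrix.PosSemidef.posSemidef_sqrt {A : Matrix n n 𝕜} (hA : A.PosSemidef) :
    hA.sqrt.PosSemidef := by
  rw [hA.sqrt_eq_cfcSqrt]; exact Matrix.nonneg_iff_posSemidef.mp (CFC.sqrt_nonneg A)

lemma Matrix.PosSemidef.sqrt_mul_self {A : Matrix n n 𝕜} (hA : A.PosSemidef) :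
    hA.sqrt * hA.sqrt = A := by
  rw [hA.sqrt_eq_cfcSqrt]; exact CFC.sqrt_mul_sqrt_self A (Matrix.nonneg_iff_posSemidef.mpr hA)

lemma Matrix.PosSemidef.eq_sqrt_of_sq_eq {A : Matrix n n 𝕜} (hA : A.PosSemidef) {B : Matrix n n 𝕜}
    (hB : B.PosSemidef) (hAB : A ^ 2 = B) : A = hB.sqrt := by
  rw [hB.sqrt_eq_cfcSqrt]
  exact (CFC.sqrt_unique (by rw [← pow_two]; exact hAB) (Matrix.nonneg_iff_posSemidef.mpr hA)).symm

end SqrtPort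

/-- The trace norm `|M|₁ = tr √(Mᴴ M)` of a complex matrix. -/
noncomputable def traceNorm {n : Type*} [Fintype n] [DecidableEq n]
    (M : Matrix n n ℂ) : ℝ :=
  ((Matrix.posSemidef_conjTranspose_mul_self M).sqrt.trace).re

section Auxiliary

variable {m : Type*} [Fintype m] [DecidableEq m]

set_option linter.unusedSectionVars false

lemma aux_trace_re_nonneg_of_psd {P : Matrix m m ℂ} (hP : P.PosSemidef) : 0 ≤ P.trace.re := by
  rw [Matrix.trace, Complex.re_sum]
  simp only [Matrix.diag_apply]
  refine Finset.sum_nonneg fun i _ => ?_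
  have := hP.re_dotProduct_nonneg (Pi.single i 1)
  simpa [dotProduct, mulVec, Pi.single_apply, Finset.sum_ite_eq, mul_comm] using this

lemma aux_trace_mul_re_nonneg {A B : Matrix m m ℂ} (hA : A.PosSemidef) (hB : B.PosSemidef) :
    0 ≤ ((A * B).trace).re := by
  have h1 : (A * B).trace = (hA.sqrt * B * hA.sqrtᴴ).trace := by
    rw [hA.posSemidef_sqrt.isHermitian.eq, Matrix.trace_mul_cycle, hA.sqrt_mul_self]
  rw [h1]
  exact aux_trace_re_nonneg_of_psd (hB.mul_mul_conjTranspose_same _)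

lemma aux_trace_mul_re_mono {R P Q : Matrix m m ℂ} (hR : R.PosSemidef)
    (hPQ : (Q - P).PosSemidef) : ((R * P).trace).re ≤ ((R * Q).trace).re := by
  have := aux_trace_mul_re_nonneg hR hPQ
  rw [Matrix.mul_sub, Matrix.trace_sub, Complex.sub_re] at this
  linarith

lemma aux_conjTranspose_mul_trace_re (A : Matrix m m ℂ) :
    ((Aᴴ * A).trace).re = ∑ p : m × m, ‖A p.1 p.2‖ ^ 2 := by
  rw [Matrix.trace, Complex.re_sum, ← Finset.univ_product_univ, Finset.sum_product_right]
  congr 1; ext j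
  simp only [Matrix.diag_apply, Matrix.mul_apply, Complex.re_sum, Matrix.conjTranspose_apply]
  congr 1; ext i
  rw [Complex.sq_norm, Complex.star_def, ← Complex.normSq_eq_conj_mul_self]
  simp

lemma aux_trace_mul_re_le_cs (A B : Matrix m m ℂ) :
    ((A * B).trace).re ≤
      Real.sqrt (((Aᴴ * A).trace).re) * Real.sqrt (((Bᴴ * B).trace).re) := by
  have h1 : ((A * B).trace).re
      ≤ ∑ p : m × m, ‖A p.1 p.2‖ * ‖B p.2 p.1‖ := by
    rw [Matrix.trace, Complex.re_sum, ← Finset.univ_product_univ, Finset.sum_product]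
    calc ∑ i, ((A * B).diag i).re ≤ ∑ i, ∑ j, ‖A i j * B j i‖ := by
          refine Finset.sum_le_sum fun i _ => ?_
          simp only [Matrix.diag_apply, Matrix.mul_apply, Complex.re_sum]
          exact Finset.sum_le_sum fun j _ => Complex.re_le_norm _
      _ = _ := by simp [norm_mul]
  refine h1.trans ?_
  have h2 := Real.sum_mul_le_sqrt_mul_sqrt Finset.univ
    (fun p : m × m => ‖A p.1 p.2‖) (fun p : m × m => ‖B p.2 p.1‖)
  rw [aux_conjTranspose_mul_trace_re A, aux_conjTranspose_mul_trace_re B]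
  have h3 : ∑ p : m × m, ‖B p.2 p.1‖ ^ 2
      = ∑ p : m × m, ‖B p.1 p.2‖ ^ 2 :=
    Fintype.sum_equiv (Equiv.prodComm m m) _ _ (fun p => rfl)
  rw [h3] at h2
  exact h2

lemma aux_conj_mul_conj {W : Matrix m m ℂ} (hW : star W * W = 1) (f g : m → ℂ) :
    (W * diagonal f * star W) * (W * diagonal g * star W)
      = W * diagonal (fun i => f i * g i) * star W := by
  rw [Matrix.mul_assoc, Matrix.mul_assoc, ← Matrix.mul_assoc (star W), ← Matrix.mul_assoc (star W),
    hW, Matrix.one_mul, ← Matrix.mul_assoc, ← Matrix.mul_assoc, Matrix.mul_assoc W,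
    diagonal_mul_diagonal]

lemma aux_exists_unitary_traceNorm {M : Matrix m m ℂ} (hM : M.IsHermitian) :
    ∃ U : Matrix m m ℂ, Uᴴ * U = 1 ∧ traceNorm M = ((U * M).trace).re := by
  set W : Matrix m m ℂ := (hM.eigenvectorUnitary : Matrix m m ℂ) with hWdef
  have hW1 : star W * W = 1 := Unitary.coe_star_mul_self hM.eigenvectorUnitary
  have hW2 : W * star W = 1 := Unitary.coe_mul_star_self hM.eigenvectorUnitary
  set d : m → ℝ := hM.eigenvalues with hd
  have hspec : M = W * diagonal ((↑) ∘ d) * star W := by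
    have := hM.spectral_theorem; rwa [Unitary.conjStarAlgAut_apply] at this
  set sgn : m → ℂ := fun i => if d i < 0 then -1 else 1 with hsgn
  set U : Matrix m m ℂ := W * diagonal sgn * star W with hU
  set N : Matrix m m ℂ := W * diagonal (fun i => ((|d i| : ℝ) : ℂ)) * star W with hN
  have habs : (fun i => sgn i * ((↑) ∘ d) i) = fun i => ((|d i| : ℝ) : ℂ) := by
    funext i
    by_cases hdi : d i < 0
    · simp only [hsgn, if_pos hdi, Function.comp_apply, abs_of_neg hdi]
      push_cast; ring
    · simp only [hsgn, if_neg hdi, Function.comp_apply, abs_of_nonneg (le_of_not_gt hdi)]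
      ring
  have hUM : U * M = N := by
    rw [hU, hspec, aux_conj_mul_conj hW1, habs, ← hN]
  have hNpsd : N.PosSemidef := by
    have hdiag : (diagonal (fun i => ((|d i| : ℝ) : ℂ))).PosSemidef :=
      posSemidef_diagonal_iff.mpr fun i => by
        rw [Complex.zero_le_real]; exact abs_nonneg _
    simpa [Matrix.star_eq_conjTranspose, hN] using hdiag.mul_mul_conjTranspose_same W
  have hNsq : N ^ 2 = Mᴴ * M := by
    rw [hM.eq, hspec, hN, pow_two, aux_conj_mul_conj hW1, aux_conj_mul_conj hW1]
    simp only [Function.comp_apply]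
    have habs2 : (fun i => ((|d i| : ℝ) : ℂ) * ((|d i| : ℝ) : ℂ))
        = fun i => ((d i : ℝ) : ℂ) * ((d i : ℝ) : ℂ) := by
      funext i
      rw [← Complex.ofReal_mul, ← Complex.ofReal_mul, abs_mul_abs_self]
    rw [habs2]
  have hsqrt : N = (Matrix.posSemidef_conjTranspose_mul_self M).sqrt :=
    hNpsd.eq_sqrt_of_sq_eq _ hNsq
  have hsgnstar : star sgn = sgn := by
    funext i
    by_cases hdi : d i < 0 <;> simp [hsgn, hdi]
  have hUH : Uᴴ = U := by
    rw [hU, ← Matrix.star_eq_conjTranspose]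
    simp only [StarMul.star_mul, star_star]
    rw [Matrix.star_eq_conjTranspose (diagonal sgn), diagonal_conjTranspose, hsgnstar,
      Matrix.mul_assoc]
  have hsq : U * U = 1 := by
    rw [hU, aux_conj_mul_conj hW1]
    have h1 : (fun i => sgn i * sgn i) = fun _ => (1 : ℂ) := by
      funext i; by_cases hdi : d i < 0 <;> simp [hsgn, hdi]
    rw [h1, diagonal_one, Matrix.mul_one, hW2]
  refine ⟨U, by rw [hUH, hsq], ?_⟩
  rw [hUM, traceNorm, ← hsqrt]

lemma aux_eigenvalues_le_one {Λ : Matrix m m ℂ} (hΛ : Λ.PosSemidef) (hle : (1 - Λ).PosSemidef)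
    (i : m) : hΛ.1.eigenvalues i ≤ 1 := by
  have h0 := hle.re_dotProduct_nonneg ⇑(hΛ.1.eigenvectorBasis i)
  have hnorm : RCLike.re (dotProduct (star ⇑(hΛ.1.eigenvectorBasis i))
      ⇑(hΛ.1.eigenvectorBasis i)) = 1 := by
    rw [dotProduct_comm]
    simp only [← EuclideanSpace.inner_eq_star_dotProduct, inner_self_eq_norm_sq_to_K,
      hΛ.1.eigenvectorBasis.orthonormal.1 i]
    norm_num
  have heig := hΛ.1.eigenvalues_eq i
  rw [Matrix.sub_mulVec, Matrix.one_mulVec, dotProduct_sub, map_sub, hnorm, ← heig] at h0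
  linarith

lemma aux_conj_diag_psd (W : Matrix m m ℂ) {f : m → ℝ} (hf : ∀ i, 0 ≤ f i) :
    (W * diagonal (Complex.ofReal ∘ f) * star W).PosSemidef := by
  have hdiag : (diagonal (Complex.ofReal ∘ f)).PosSemidef :=
    posSemidef_diagonal_iff.mpr fun i => by
      rw [Function.comp_apply, Complex.zero_le_real]; exact hf i
  simpa [Matrix.star_eq_conjTranspose] using hdiag.mul_mul_conjTranspose_same W

lemma aux_conj_diag_sub (W : Matrix m m ℂ) (f g : m → ℝ) :
    W * diagonal (Complex.ofReal ∘ f) * star W - W * diagonal (Complex.ofReal ∘ g) * star W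
      = W * diagonal (Complex.ofReal ∘ (fun i => f i - g i)) * star W := by
  rw [← Matrix.sub_mul, ← Matrix.mul_sub, diagonal_sub]
  have h1 : (fun i => (Complex.ofReal ∘ f) i - (Complex.ofReal ∘ g) i)
      = Complex.ofReal ∘ (fun i => f i - g i) := by
    funext i; simp
  rw [h1]

lemma aux_sqrt_facts {Λ : Matrix m m ℂ} (hΛ : Λ.PosSemidef) (hle : (1 - Λ).PosSemidef) :
    (1 - hΛ.sqrt).PosSemidef ∧ (hΛ.sqrt - Λ).PosSemidef := by
  have hd0 : ∀ i, 0 ≤ hΛ.1.eigenvalues i := hΛ.eigenvalues_nonneg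
  have hd1 : ∀ i, hΛ.1.eigenvalues i ≤ 1 := aux_eigenvalues_le_one hΛ hle
  set W : Matrix m m ℂ := (hΛ.1.eigenvectorUnitary : Matrix m m ℂ) with hW
  have hW2 : W * star W = 1 := Unitary.coe_mul_star_self _
  have hX : hΛ.sqrt
      = W * diagonal (Complex.ofReal ∘ (fun i => Real.sqrt (hΛ.1.eigenvalues i))) * star W :=
    rfl
  have hone : (1 : Matrix m m ℂ)
      = W * diagonal (Complex.ofReal ∘ (fun _ : m => (1 : ℝ))) * star W := by
    have h1 : diagonal (Complex.ofReal ∘ (fun _ : m => (1 : ℝ))) = (1 : Matrix m m ℂ) := by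
      rw [show (Complex.ofReal ∘ (fun _ : m => (1 : ℝ))) = (fun _ : m => (1 : ℂ)) from
        by funext i; simp, diagonal_one]
    rw [h1, Matrix.mul_one, hW2]
  have hΛeq : Λ = W * diagonal (Complex.ofReal ∘ hΛ.1.eigenvalues) * star W :=
    by have := hΛ.1.spectral_theorem; rwa [Unitary.conjStarAlgAut_apply] at this
  constructor
  · have e1 := aux_conj_diag_sub W (fun _ : m => (1 : ℝ)) (fun i => Real.sqrt (hΛ.1.eigenvalues i))
    rw [← hone, ← hX] at e1
    rw [e1]
    exact aux_conj_diag_psd W fun i => by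
      have := Real.sqrt_le_one.mpr (hd1 i); linarith
  · have e2 := aux_conj_diag_sub W (fun i => Real.sqrt (hΛ.1.eigenvalues i)) hΛ.1.eigenvalues
    rw [← hX, ← hΛeq] at e2
    rw [e2]
    exact aux_conj_diag_psd W fun i => by
      nlinarith [Real.sq_sqrt (hd0 i), Real.sqrt_le_one.mpr (hd1 i),
        Real.sqrt_nonneg (hΛ.1.eigenvalues i)]

end Auxiliary

/-- Gentle measurement lemma: if `0 ≤ Λ ≤ 1` and `tr(ρΛ) ≥ 1 − ε`, then
`|√Λ ρ √Λ − ρ|₁ ≤ √(8ε)`. -/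
theorem gentle_measurement {n : ℕ}
    (ρ Λ : Matrix (Fin n) (Fin n) ℂ)
    (hρ : ρ.PosSemidef) (hρtr : ρ.trace = 1)
    (hΛ : Λ.PosSemidef) (hΛle : (1 - Λ).PosSemidef)
    (ε : ℝ) (hε : 0 ≤ ε)
    (h : ((ρ * Λ).trace).re ≥ 1 - ε) :
    traceNorm (hΛ.sqrt * ρ * hΛ.sqrt - ρ) ≤ Real.sqrt (8 * ε) := by
  have hXpsd : (hΛ.sqrt).PosSemidef := hΛ.posSemidef_sqrt
  have hXX : hΛ.sqrt * hΛ.sqrt = Λ := hΛ.sqrt_mul_self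
  obtain ⟨h1X, hXΛ⟩ := aux_sqrt_facts hΛ hΛle
  have hSpsd : (hρ.sqrt).PosSemidef := hρ.posSemidef_sqrt
  have hSS : hρ.sqrt * hρ.sqrt = ρ := hρ.sqrt_mul_self
  generalize hXg : hΛ.sqrt = X at hXpsd hXX h1X hXΛ ⊢
  generalize hSg : hρ.sqrt = S at hSpsd hSS
  have hXh : Xᴴ = X := hXpsd.1
  have hSh : Sᴴ = S := hSpsd.1
  have hXm1 : (X - 1)ᴴ = X - 1 := by rw [conjTranspose_sub, conjTranspose_one, hXh]
  -- Hermiticity of the difference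
  have hMh : (X * ρ * X - ρ).IsHermitian := by
    have : (X * ρ * X - ρ)ᴴ = X * ρ * X - ρ := by
      simp only [conjTranspose_sub, conjTranspose_mul, hXh, hρ.1.eq, Matrix.mul_assoc]
    exact this
  obtain ⟨U, hU, hTN⟩ := aux_exists_unitary_traceNorm hMh
  have hUU : ∀ Z : Matrix (Fin n) (Fin n) ℂ, Uᴴ * (U * Z) = Z := fun Z => by
    rw [← Matrix.mul_assoc, hU, Matrix.one_mul]
  -- scalar facts
  have hρre : ρ.trace.re = 1 := by rw [hρtr]; simp
  have hρΛ1 : ((ρ * Λ).trace).re ≤ 1 := by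
    have h0 := aux_trace_mul_re_nonneg hρ hΛle
    rw [Matrix.mul_sub, Matrix.mul_one, Matrix.trace_sub, Complex.sub_re, hρre] at h0
    linarith
  -- the key quantity t1 = tr(ρ (1-X)²)
  have hTpsd : ((1 - X) * (1 - X)).PosSemidef := by
    rw [← pow_two]; exact h1X.pow 2
  have ht10 : 0 ≤ ((ρ * ((1 - X) * (1 - X))).trace).re := aux_trace_mul_re_nonneg hρ hTpsd
  have ht1a : ((ρ * ((1 - X) * (1 - X))).trace).re ≤ ((ρ * (1 - X)).trace).re := by
    refine aux_trace_mul_re_mono hρ ?_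
    have e : (1 : Matrix (Fin n) (Fin n) ℂ) - X - (1 - X) * (1 - X) = X - Λ := by
      rw [← hXX]; noncomm_ring
    rw [e]; exact hXΛ
  have ht1b : ((ρ * (1 - X)).trace).re ≤ ((ρ * (1 - Λ)).trace).re := by
    refine aux_trace_mul_re_mono hρ ?_
    have e : (1 : Matrix (Fin n) (Fin n) ℂ) - Λ - (1 - X) = X - Λ := by noncomm_ring
    rw [e]; exact hXΛ
  have ht1c : ((ρ * (1 - Λ)).trace).re = 1 - ((ρ * Λ).trace).re := by
    rw [Matrix.mul_sub, Matrix.mul_one, Matrix.trace_sub, Complex.sub_re, hρre]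
  have ht1 : ((ρ * ((1 - X) * (1 - X))).trace).re ≤ ε := by linarith
  -- decomposition
  have hdecomp : U * (X * ρ * X - ρ) = U * ((X - 1) * ρ * X) + U * (ρ * (X - 1)) := by
    rw [← Matrix.mul_add]; congr 1; noncomm_ring
  -- first term
  have hA1 : U * ((X - 1) * ρ * X) = (U * (X - 1) * S) * (S * X) := by
    rw [← hSS]; noncomm_ring
  have cs1 := aux_trace_mul_re_le_cs (U * (X - 1) * S) (S * X)
  have e1 : (((U * (X - 1) * S)ᴴ * (U * (X - 1) * S)).trace).re
      = ((ρ * ((1 - X) * (1 - X))).trace).re := by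
    have e : (U * (X - 1) * S)ᴴ * (U * (X - 1) * S) = S * ((X - 1) * ((X - 1) * S)) := by
      simp only [conjTranspose_mul, hXm1, hSh, Matrix.mul_assoc, hUU]
    rw [e, Matrix.trace_mul_comm, Matrix.trace_mul_comm ρ ((1 - X) * (1 - X))]
    refine congrArg (fun M : Matrix (Fin n) (Fin n) ℂ => (Matrix.trace M).re) ?_
    rw [← hSS]; noncomm_ring
  have e2 : (((S * X)ᴴ * (S * X)).trace).re = ((ρ * Λ).trace).re := by
    have e : (S * X)ᴴ * (S * X) = X * (S * (S * X)) := by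
      simp only [conjTranspose_mul, hXh, hSh, Matrix.mul_assoc]
    rw [e, Matrix.trace_mul_comm]
    refine congrArg (fun M : Matrix (Fin n) (Fin n) ℂ => (Matrix.trace M).re) ?_
    rw [← hSS, ← hXX]; noncomm_ring
  have hterm1 : ((U * ((X - 1) * ρ * X)).trace).re ≤ Real.sqrt ε := by
    rw [hA1]
    refine (cs1.trans ?_)
    rw [e1, e2]
    calc Real.sqrt (((ρ * ((1 - X) * (1 - X))).trace).re) * Real.sqrt (((ρ * Λ).trace).re)
        ≤ Real.sqrt ε * 1 := by
          refine mul_le_mul (Real.sqrt_le_sqrt ht1) (Real.sqrt_le_one.mpr hρΛ1)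
            (Real.sqrt_nonneg _) (Real.sqrt_nonneg _)
      _ = Real.sqrt ε := by ring
  -- second term
  have hA2 : U * (ρ * (X - 1)) = (U * S) * (S * (X - 1)) := by
    rw [← hSS]; noncomm_ring
  have cs2 := aux_trace_mul_re_le_cs (U * S) (S * (X - 1))
  have e3 : (((U * S)ᴴ * (U * S)).trace).re = 1 := by
    have e : (U * S)ᴴ * (U * S) = S * S := by
      simp only [conjTranspose_mul, hSh, Matrix.mul_assoc, hUU]
    rw [e, hSS, hρre]
  have e4 : (((S * (X - 1))ᴴ * (S * (X - 1))).trace).re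
      = ((ρ * ((1 - X) * (1 - X))).trace).re := by
    have e : (S * (X - 1))ᴴ * (S * (X - 1)) = (X - 1) * (S * (S * (X - 1))) := by
      simp only [conjTranspose_mul, hXm1, hSh, Matrix.mul_assoc]
    rw [e, Matrix.trace_mul_comm]
    refine congrArg (fun M : Matrix (Fin n) (Fin n) ℂ => (Matrix.trace M).re) ?_
    rw [← hSS]; noncomm_ring
  have hterm2 : ((U * (ρ * (X - 1))).trace).re ≤ Real.sqrt ε := by
    rw [hA2]
    refine (cs2.trans ?_)
    rw [e3, e4]
    calc Real.sqrt 1 * Real.sqrt (((ρ * ((1 - X) * (1 - X))).trace).re)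
        ≤ 1 * Real.sqrt ε := by
          refine mul_le_mul (by rw [Real.sqrt_one]) (Real.sqrt_le_sqrt ht1)
            (Real.sqrt_nonneg _) (by norm_num)
      _ = Real.sqrt ε := by ring
  -- combine
  have hsum : traceNorm (X * ρ * X - ρ) ≤ 2 * Real.sqrt ε := by
    rw [hTN, hdecomp, Matrix.trace_add, Complex.add_re]
    linarith
  refine hsum.trans ?_
  have h8 : (2 : ℝ) ≤ Real.sqrt 8 := by
    nlinarith [Real.sq_sqrt (by norm_num : (0:ℝ) ≤ 8), Real.sqrt_nonneg 8]
  calc 2 * Real.sqrt ε ≤ Real.sqrt 8 * Real.sqrt ε :=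
        mul_le_mul_of_nonneg_right h8 (Real.sqrt_nonneg ε)
    _ = Real.sqrt (8 * ε) := (Real.sqrt_mul (by norm_num) ε).symm
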